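/- Let (X, ‖·‖) be a complex normed space and x, y ≠ 0 with ∠(x,y) = π/2 + a + i·b, where −π/2 ≤ a ≤ π/2 and b ∈ ℝ (and b = 0 in case a = ±π/2). Then ∠(i·x, y) = π/2 + (1/2)·[ −sgn(b)·arccos(H₋) + i·sgn(a)·arcosh(H₊) ], where H± := √( (cos²(π/2+a) + cosh²(b) − 2)² + 4·cos²(π/2+a)·cosh²(b) ) ± ( cos²(π/2+a) + cosh²(b) − 1 ), using the real cosine, hyperbolic cosine, arccosine, sign function, and arcosh(x) := log(x + √(x²−1)). -/
import Mathlib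
set_option maxHeartbeats 10000000


/-- The real area hyperbolic cosine, `arcosh x = log (x + √(x² − 1))`. -/
noncomputable def arcosh (x : ℝ) : ℝ := Real.log (x + Real.sqrt (x ^ 2 - 1))

/-- `G₋ = √((r²+s²−1)² + 4s²) − (r²+s²)` for `z = r + i·s`. -/
noncomputable def Gminus (z : ℂ) : ℝ :=
  Real.sqrt ((z.re ^ 2 + z.im ^ 2 - 1) ^ 2 + 4 * z.im ^ 2) - (z.re ^ 2 + z.im ^ 2)

/-- `G₊ = √((r²+s²−1)² + 4s²) + (r²+s²)` for `z = r + i·s`. -/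
noncomputable def Gplus (z : ℂ) : ℝ :=
  Real.sqrt ((z.re ^ 2 + z.im ^ 2 - 1) ^ 2 + 4 * z.im ^ 2) + (z.re ^ 2 + z.im ^ 2)

/-- The complex arcsine: `arcsin(r+is) = ½·(sgn r · arccos G₋ + i · sgn s · arcosh G₊)`. -/
noncomputable def carcsin (z : ℂ) : ℂ :=
  (1 / 2 : ℂ) *
    (((Real.sign z.re * Real.arccos (Gminus z) : ℝ) : ℂ) +
      Complex.I * ((Real.sign z.im * arcosh (Gplus z) : ℝ) : ℂ))

/-- The complex arccosine: `arccos z = π/2 − arcsin z`. -/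
noncomputable def carccos (z : ℂ) : ℂ := ((Real.pi / 2 : ℝ) : ℂ) - carcsin z
/-- The continuous product `⟨x|y⟩` in a complex normed space. -/
noncomputable def cprod {X : Type*} [NormedAddCommGroup X] [NormedSpace ℂ X] (x y : X) : ℂ :=
  open scoped Classical in
  if x = 0 ∨ y = 0 then 0
  else
    ((‖x‖ * ‖y‖ : ℝ) : ℂ) * (1 / 4 : ℂ) *
      (((‖((‖x‖⁻¹ : ℝ) : ℂ) • x + ((‖y‖⁻¹ : ℝ) : ℂ) • y‖ ^ 2
          - ‖((‖x‖⁻¹ : ℝ) : ℂ) • x - ((‖y‖⁻¹ : ℝ) : ℂ) • y‖ ^ 2 : ℝ) : ℂ)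
        + Complex.I *
          ((‖((‖x‖⁻¹ : ℝ) : ℂ) • x + Complex.I • (((‖y‖⁻¹ : ℝ) : ℂ) • y)‖ ^ 2
            - ‖((‖x‖⁻¹ : ℝ) : ℂ) • x - Complex.I • (((‖y‖⁻¹ : ℝ) : ℂ) • y)‖ ^ 2 : ℝ) : ℂ))
/-- The complex angle `∠(x,y) = arccos(⟨x|y⟩ / (‖x‖·‖y‖))`. -/
noncomputable def cangle {X : Type*} [NormedAddCommGroup X] [NormedSpace ℂ X] (x y : X) : ℂ :=
  carccos (cprod x y / ((‖x‖ * ‖y‖ : ℝ) : ℂ))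

lemma cosh_arcosh {g : ℝ} (hg : 1 ≤ g) : Real.cosh (arcosh g) = g := by
  have h0 : 0 ≤ g ^ 2 - 1 := by nlinarith
  have hs : Real.sqrt (g ^ 2 - 1) ^ 2 = g ^ 2 - 1 := Real.sq_sqrt h0
  have hn := Real.sqrt_nonneg (g ^ 2 - 1)
  have hpos : 0 < g + Real.sqrt (g ^ 2 - 1) := by linarith
  rw [arcosh, Real.cosh_eq, Real.exp_log hpos, Real.exp_neg, Real.exp_log hpos]
  field_simp
  nlinarith [hs]

lemma arcosh_pos {g : ℝ} (hg : 1 < g) : 0 < arcosh g :=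
  Real.log_pos (by have := Real.sqrt_nonneg (g ^ 2 - 1); linarith)

lemma sin_half_sq (x : ℝ) : Real.sin (x / 2) ^ 2 = (1 - Real.cos x) / 2 := by
  have h := Real.cos_sq (x / 2)
  have h2 : 2 * (x / 2) = x := by ring
  rw [h2] at h
  have h3 := Real.sin_sq_add_cos_sq (x / 2)
  linarith

lemma cosh_half_sq (x : ℝ) : Real.cosh (x / 2) ^ 2 = (1 + Real.cosh x) / 2 := by
  have h := Real.cosh_two_mul (x / 2)
  have h2 : 2 * (x / 2) = x := by ring
  rw [h2] at h
  have h3 := Real.cosh_sq (x / 2)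
  linarith

lemma key (z : ℂ) (a b : ℝ) (hr1 : z.re ^ 2 ≤ 1)
    (h : carccos z = ((Real.pi / 2 + a : ℝ) : ℂ) + Complex.I * ((b : ℝ) : ℂ)) :
    carccos (Complex.I * z) =
      ((Real.pi / 2 : ℝ) : ℂ) + (1 / 2 : ℂ) *
        (((-(Real.sign b) * Real.arccos
            (Real.sqrt ((Real.cos (Real.pi / 2 + a) ^ 2 + Real.cosh b ^ 2 - 2) ^ 2
                + 4 * Real.cos (Real.pi / 2 + a) ^ 2 * Real.cosh b ^ 2)
              - (Real.cos (Real.pi / 2 + a) ^ 2 + Real.cosh b ^ 2 - 1)) : ℝ) : ℂ)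
          + Complex.I *
            ((Real.sign a * arcosh
              (Real.sqrt ((Real.cos (Real.pi / 2 + a) ^ 2 + Real.cosh b ^ 2 - 2) ^ 2
                  + 4 * Real.cos (Real.pi / 2 + a) ^ 2 * Real.cosh b ^ 2)
                + (Real.cos (Real.pi / 2 + a) ^ 2 + Real.cosh b ^ 2 - 1)) : ℝ) : ℂ)) := by
  obtain ⟨r, hr⟩ : ∃ r, z.re = r := ⟨_, rfl⟩
  obtain ⟨s, hs⟩ : ∃ s, z.im = s := ⟨_, rfl⟩
  rw [hr] at hr1
  have hgm : Gminus z = Real.sqrt ((r^2+s^2-1)^2 + 4*s^2) - (r^2+s^2) := by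
    rw [Gminus, hr, hs]
  have hgp : Gplus z = Real.sqrt ((r^2+s^2-1)^2 + 4*s^2) + (r^2+s^2) := by
    rw [Gplus, hr, hs]
  rw [carccos, carcsin, hr, hs, hgm, hgp] at h
  simp [Complex.ext_iff] at h
  obtain ⟨h1, h2⟩ := h
  -- facts about the square root, before we make it opaque
  have hq0 : 0 ≤ Real.sqrt ((r^2+s^2-1)^2 + 4*s^2) := Real.sqrt_nonneg _
  have hq2 : Real.sqrt ((r^2+s^2-1)^2 + 4*s^2) ^ 2 = (r^2+s^2-1)^2 + 4*s^2 :=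
    Real.sq_sqrt (by positivity)
  have habs : |r^2+s^2-1| ≤ Real.sqrt ((r^2+s^2-1)^2 + 4*s^2) := by
    rw [← Real.sqrt_sq_eq_abs]
    exact Real.sqrt_le_sqrt (by linarith [sq_nonneg s])
  have hlb1 : r^2+s^2-1 ≤ Real.sqrt ((r^2+s^2-1)^2 + 4*s^2) :=
    le_trans (le_abs_self _) habs
  have hlb2 : 1-(r^2+s^2) ≤ Real.sqrt ((r^2+s^2-1)^2 + 4*s^2) := by
    have h5 : 1-(r^2+s^2) ≤ |r^2+s^2-1| := by
      rw [abs_sub_comm]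
      exact le_abs_self _
    linarith
  have hub : Real.sqrt ((r^2+s^2-1)^2 + 4*s^2) ≤ 1+(r^2+s^2) := by
    rw [show (r^2+s^2-1)^2 + 4*s^2 = (1+(r^2+s^2))^2 - 4*r^2 by ring]
    calc Real.sqrt ((1+(r^2+s^2))^2 - 4*r^2) ≤ Real.sqrt ((1+(r^2+s^2))^2) :=
          Real.sqrt_le_sqrt (by linarith [sq_nonneg r])
      _ = 1+(r^2+s^2) := Real.sqrt_sq (by positivity)
  have hlt_r : r ≠ 0 → Real.sqrt ((r^2+s^2-1)^2 + 4*s^2) < 1+(r^2+s^2) := by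
    intro hrne
    have hr2 : 0 < r^2 := by positivity
    rw [show (r^2+s^2-1)^2 + 4*s^2 = (1+(r^2+s^2))^2 - 4*r^2 by ring]
    calc Real.sqrt ((1+(r^2+s^2))^2 - 4*r^2) < Real.sqrt ((1+(r^2+s^2))^2) :=
          Real.sqrt_lt_sqrt (by nlinarith [sq_nonneg (r^2+s^2-1), sq_nonneg s]) (by linarith)
      _ = 1+(r^2+s^2) := Real.sqrt_sq (by positivity)
  have hlt_s : s ≠ 0 → 1-(r^2+s^2) < Real.sqrt ((r^2+s^2-1)^2 + 4*s^2) := by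
    intro hsne
    have hs2 : 0 < s^2 := by positivity
    have h5 : |r^2+s^2-1| < Real.sqrt ((r^2+s^2-1)^2 + 4*s^2) := by
      rw [← Real.sqrt_sq_eq_abs]
      exact Real.sqrt_lt_sqrt (sq_nonneg _) (by linarith)
    have h6 : 1-(r^2+s^2) ≤ |r^2+s^2-1| := by
      rw [abs_sub_comm]
      exact le_abs_self _
    linarith
  have hEr0 : r = 0 → Real.sqrt ((r^2+s^2-1)^2 + 4*s^2) = r^2+s^2+1 := by
    intro h5
    subst h5
    rw [show ((0:ℝ)^2+s^2-1)^2 + 4*s^2 = ((0:ℝ)^2+s^2+1)^2 by ring]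
    exact Real.sqrt_sq (by positivity)
  have hEs0 : s = 0 → Real.sqrt ((r^2+s^2-1)^2 + 4*s^2) = 1-(r^2+s^2) := by
    intro h5
    subst h5
    rw [show (r^2+(0:ℝ)^2-1)^2 + 4*(0:ℝ)^2 = (1-(r^2+(0:ℝ)^2))^2 by ring]
    exact Real.sqrt_sq (by nlinarith)
  -- make the square root opaque
  obtain ⟨q, hqdef⟩ : ∃ q, Real.sqrt ((r^2+s^2-1)^2 + 4*s^2) = q := ⟨_, rfl⟩
  rw [hqdef] at h1 h2 hq0 hq2 habs hlb1 hlb2 hub hlt_r hlt_s hEr0 hEs0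
  obtain ⟨α, hadef⟩ : ∃ α, Real.arccos (q - (r^2+s^2)) = α := ⟨_, rfl⟩
  obtain ⟨β, hbdef⟩ : ∃ β, arcosh (q + (r^2+s^2)) = β := ⟨_, rfl⟩
  rw [hadef] at h1
  rw [hbdef] at h2
  have haa : a = -(Real.sign r * α) / 2 := by linarith
  have hbb : b = -(Real.sign s * β) / 2 := by linarith
  have hgm_ge : -1 ≤ q - (r^2+s^2) := by linarith
  have hgm_le : q - (r^2+s^2) ≤ 1 := by linarith
  have hgp_ge : 1 ≤ q + (r^2+s^2) := by linarith
  have hca : Real.cos α = q - (r^2+s^2) := by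
    rw [← hadef]; exact Real.cos_arccos hgm_ge hgm_le
  have hcb : Real.cosh β = q + (r^2+s^2) := by
    rw [← hbdef]; exact cosh_arcosh hgp_ge
  -- sin a squared
  have hsin : Real.sin a ^ 2 = (1 - (q - (r^2+s^2))) / 2 := by
    rcases lt_trichotomy r 0 with hrr | hrr | hrr
    · rw [haa, Real.sign_of_neg hrr, show -((-1:ℝ) * α) / 2 = α / 2 by ring,
        sin_half_sq, hca]
    · have hsz : Real.sign r = 0 := by rw [hrr]; exact Real.sign_zero
      have hq1 : q - (r^2+s^2) = 1 := by
        have := hEr0 hrr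
        linarith
      rw [haa, hsz, hq1]
      norm_num
    · rw [haa, Real.sign_of_pos hrr, show -((1:ℝ) * α) / 2 = -(α / 2) by ring,
        Real.sin_neg, neg_sq, sin_half_sq, hca]
  -- cosh b squared
  have hcosh : Real.cosh b ^ 2 = (1 + (q + (r^2+s^2))) / 2 := by
    rcases lt_trichotomy s 0 with hss | hss | hss
    · rw [hbb, Real.sign_of_neg hss, show -((-1:ℝ) * β) / 2 = β / 2 by ring,
        cosh_half_sq, hcb]
    · have hsz : Real.sign s = 0 := by rw [hss]; exact Real.sign_zero
      have hq1 : q + (r^2+s^2) = 1 := by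
        have := hEs0 hss
        linarith
      rw [hbb, hsz, hq1]
      norm_num
    · rw [hbb, Real.sign_of_pos hss, show -((1:ℝ) * β) / 2 = -(β / 2) by ring,
        Real.cosh_neg, cosh_half_sq, hcb]
  -- the goal-side quantities
  have hcpa : Real.cos (Real.pi / 2 + a) ^ 2 = Real.sin a ^ 2 := by
    rw [Real.cos_add, Real.cos_pi_div_two, Real.sin_pi_div_two]; ring
  have hch : Real.cos (Real.pi / 2 + a) ^ 2 + Real.cosh b ^ 2 = (r^2+s^2) + 1 := by
    rw [hcpa, hsin, hcosh]; ring
  have hch4 : 4 * Real.cos (Real.pi / 2 + a) ^ 2 * Real.cosh b ^ 2 = 4 * r ^ 2 := by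
    rw [hcpa, hsin, hcosh]
    linear_combination (-1 : ℝ) * hq2
  -- the left side
  have hire : (Complex.I * z).re = -s := by
    rw [Complex.mul_re, Complex.I_re, Complex.I_im, hr, hs]; ring
  have hiim : (Complex.I * z).im = r := by
    rw [Complex.mul_im, Complex.I_re, Complex.I_im, hr, hs]; ring
  have hgm2 : Gminus (Complex.I * z) = Real.sqrt ((r^2+s^2-1)^2 + 4*r^2) - (r^2+s^2) := by
    rw [Gminus, hire, hiim]
    rw [show ((-s:ℝ)^2 + r^2 - 1)^2 + 4*r^2 = (r^2+s^2-1)^2 + 4*r^2 by ring,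
      show ((-s:ℝ)^2 + r^2) = r^2+s^2 by ring]
  have hgp2 : Gplus (Complex.I * z) = Real.sqrt ((r^2+s^2-1)^2 + 4*r^2) + (r^2+s^2) := by
    rw [Gplus, hire, hiim]
    rw [show ((-s:ℝ)^2 + r^2 - 1)^2 + 4*r^2 = (r^2+s^2-1)^2 + 4*r^2 by ring,
      show ((-s:ℝ)^2 + r^2) = r^2+s^2 by ring]
  rw [carccos, carcsin, hire, hiim, hgm2, hgp2, hch, hch4,
    show ((r^2+s^2:ℝ) + 1 - 2) = r^2+s^2-1 by ring,
    show ((r^2+s^2:ℝ) + 1 - 1) = r^2+s^2 by ring]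
  -- sign computations
  have E1 : Real.sign (-s) * Real.arccos (Real.sqrt ((r^2+s^2-1)^2 + 4*r^2) - (r^2+s^2))
      = Real.sign b * Real.arccos (Real.sqrt ((r^2+s^2-1)^2 + 4*r^2) - (r^2+s^2)) := by
    rcases lt_trichotomy s 0 with hss | hss | hss
    · have hb0 : 0 < b := by
        have hβ : 0 < β := by
          rw [← hbdef]
          apply arcosh_pos
          have := hlt_s (ne_of_lt hss)
          linarith
        rw [hbb, Real.sign_of_neg hss]; linarith
      rw [Real.sign_of_pos (by linarith : (0:ℝ) < -s), Real.sign_of_pos hb0]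
    · have hb0 : b = 0 := by rw [hbb, hss, Real.sign_zero]; ring
      rw [hss, hb0, neg_zero]
    · have hb0 : b < 0 := by
        have hβ : 0 < β := by
          rw [← hbdef]
          apply arcosh_pos
          have := hlt_s (ne_of_gt hss)
          linarith
        rw [hbb, Real.sign_of_pos hss]; linarith
      rw [Real.sign_of_neg (by linarith : (-s:ℝ) < 0), Real.sign_of_neg hb0]
  have E2 : Real.sign r * arcosh (Real.sqrt ((r^2+s^2-1)^2 + 4*r^2) + (r^2+s^2))
      = -(Real.sign a * arcosh (Real.sqrt ((r^2+s^2-1)^2 + 4*r^2) + (r^2+s^2))) := by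
    rcases lt_trichotomy r 0 with hrr | hrr | hrr
    · have hα : 0 < α := by
        rw [← hadef]
        apply Real.arccos_pos.mpr
        have := hlt_r (ne_of_lt hrr)
        linarith
      have ha0 : 0 < a := by rw [haa, Real.sign_of_neg hrr]; linarith
      rw [Real.sign_of_neg hrr, Real.sign_of_pos ha0]; ring
    · have ha0 : a = 0 := by rw [haa, hrr, Real.sign_zero]; ring
      rw [hrr, ha0, Real.sign_zero]; ring
    · have hα : 0 < α := by
        rw [← hadef]
        apply Real.arccos_pos.mpr
        have := hlt_r (ne_of_gt hrr)
        linarith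
      have ha0 : a < 0 := by rw [haa, Real.sign_of_pos hrr]; linarith
      rw [Real.sign_of_pos hrr, Real.sign_of_neg ha0]; ring
  rw [E1, E2]
  push_cast
  ring

lemma cprod_I_smul {X : Type*} [NormedAddCommGroup X] [NormedSpace ℂ X] (x y : X)
    (hx : x ≠ 0) (hy : y ≠ 0) :
    cprod (Complex.I • x) y = Complex.I * cprod x y := by
  have hx' : Complex.I • x ≠ 0 := by
    simp [smul_eq_zero, Complex.I_ne_zero, hx]
  rw [cprod, cprod, if_neg (by tauto), if_neg (by tauto)]
  have hn : ‖Complex.I • x‖ = ‖x‖ := by rw [norm_smul, Complex.norm_I, one_mul]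
  rw [hn]
  set A : X := ((‖x‖⁻¹ : ℝ) : ℂ) • x with hA
  set B : X := ((‖y‖⁻¹ : ℝ) : ℂ) • y with hB
  have h1 : ((‖x‖⁻¹ : ℝ) : ℂ) • (Complex.I • x) = Complex.I • A := smul_comm _ _ _
  rw [h1]
  have key : ∀ u v : X, ‖Complex.I • u + v‖ = ‖u - Complex.I • v‖ := by
    intro u v
    have : Complex.I • (u - Complex.I • v) = Complex.I • u + v := by
      rw [smul_sub, smul_smul, Complex.I_mul_I, neg_one_smul]; abel
    rw [← this, norm_smul, Complex.norm_I, one_mul]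
  have e1 : ‖Complex.I • A + B‖ = ‖A - Complex.I • B‖ := key A B
  have e2 : ‖Complex.I • A - B‖ = ‖A + Complex.I • B‖ := by
    have := key A (-B)
    simpa [sub_eq_add_neg, smul_neg] using this
  have e3 : ‖Complex.I • A + Complex.I • B‖ = ‖A + B‖ := by
    rw [← smul_add, norm_smul, Complex.norm_I, one_mul]
  have e4 : ‖Complex.I • A - Complex.I • B‖ = ‖A - B‖ := by
    rw [← smul_sub, norm_smul, Complex.norm_I, one_mul]
  rw [e1, e2, e3, e4]
  push_cast
  linear_combination (-((‖x‖:ℂ) * ‖y‖) * (1/4) * ((‖A + Complex.I • B‖:ℂ)^2 - (‖A - Complex.I • B‖:ℂ)^2)) * Complex.I_mul_I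

lemma re_of_add_I_mul (u v : ℝ) : ((u : ℂ) + Complex.I * (v : ℂ)).re = u := by
  simp

lemma cprod_div_re_sq_le {X : Type*} [NormedAddCommGroup X] [NormedSpace ℂ X] (x y : X)
    (hx : x ≠ 0) (hy : y ≠ 0) :
    (cprod x y / ((‖x‖ * ‖y‖ : ℝ) : ℂ)).re ^ 2 ≤ 1 := by
  have hxn : ‖x‖ ≠ 0 := norm_ne_zero_iff.mpr hx
  have hyn : ‖y‖ ≠ 0 := norm_ne_zero_iff.mpr hy
  have hcne : ((‖x‖ * ‖y‖ : ℝ) : ℂ) ≠ 0 :=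
    Complex.ofReal_ne_zero.mpr (mul_ne_zero hxn hyn)
  rw [cprod, if_neg (by tauto)]
  set A : X := ((‖x‖⁻¹ : ℝ) : ℂ) • x with hA
  set B : X := ((‖y‖⁻¹ : ℝ) : ℂ) • y with hB
  have hrw : ((‖x‖ * ‖y‖ : ℝ) : ℂ) * (1 / 4 : ℂ) *
      (((‖A + B‖ ^ 2 - ‖A - B‖ ^ 2 : ℝ) : ℂ)
        + Complex.I * ((‖A + Complex.I • B‖ ^ 2 - ‖A - Complex.I • B‖ ^ 2 : ℝ) : ℂ))
        / ((‖x‖ * ‖y‖ : ℝ) : ℂ)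
      = (((‖A + B‖ ^ 2 - ‖A - B‖ ^ 2) / 4 : ℝ) : ℂ)
        + Complex.I * (((‖A + Complex.I • B‖ ^ 2 - ‖A - Complex.I • B‖ ^ 2) / 4 : ℝ) : ℂ) := by
    rw [div_eq_iff hcne]
    push_cast
    ring
  rw [hrw, re_of_add_I_mul]
  have hA1 : ‖A‖ = 1 := by
    rw [hA, norm_smul, Complex.norm_real, Real.norm_eq_abs,
      abs_of_nonneg (by positivity), inv_mul_cancel₀ hxn]
  have hB1 : ‖B‖ = 1 := by
    rw [hB, norm_smul, Complex.norm_real, Real.norm_eq_abs,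
      abs_of_nonneg (by positivity), inv_mul_cancel₀ hyn]
  have hadd : ‖A + B‖ ≤ 2 := by
    calc ‖A + B‖ ≤ ‖A‖ + ‖B‖ := norm_add_le _ _
    _ = 2 := by rw [hA1, hB1]; norm_num
  have hsub : ‖A - B‖ ≤ 2 := by
    calc ‖A - B‖ ≤ ‖A‖ + ‖B‖ := norm_sub_le _ _
    _ = 2 := by rw [hA1, hB1]; norm_num
  have h1 : ‖A + B‖ ^ 2 ≤ 4 := by nlinarith [norm_nonneg (A + B)]
  have h2 : ‖A - B‖ ^ 2 ≤ 4 := by nlinarith [norm_nonneg (A - B)]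
  have h3 : 0 ≤ ‖A + B‖ ^ 2 := by positivity
  have h4 : 0 ≤ ‖A - B‖ ^ 2 := by positivity
  nlinarith [mul_nonneg (by linarith : (0:ℝ) ≤ 4 - (‖A + B‖ ^ 2 - ‖A - B‖ ^ 2))
    (by linarith : (0:ℝ) ≤ 4 + (‖A + B‖ ^ 2 - ‖A - B‖ ^ 2))]

/-- if `∠(x,y) = π/2 + a + i·b` with `−π/2 ≤ a ≤ π/2` (and `b = 0` when
`a = ±π/2`), then `∠(i·x, y) = π/2 + ½·(−sgn(b)·arccos(H₋) + i·sgn(a)·arcosh(H₊))` with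
`H± = √((cos²(π/2+a) + cosh²(b) − 2)² + 4·cos²(π/2+a)·cosh²(b)) ± (cos²(π/2+a) + cosh²(b) − 1)`. -/
theorem stmt12 {X : Type*} [NormedAddCommGroup X] [NormedSpace ℂ X] (x y : X)
    (hx : x ≠ 0) (hy : y ≠ 0) (a b : ℝ)
    (ha : -(Real.pi / 2) ≤ a) (ha' : a ≤ Real.pi / 2)
    (hb : a = Real.pi / 2 ∨ a = -(Real.pi / 2) → b = 0)
    (hangle : cangle x y = ((Real.pi / 2 + a : ℝ) : ℂ) + Complex.I * ((b : ℝ) : ℂ)) :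
    cangle (Complex.I • x) y =
      ((Real.pi / 2 : ℝ) : ℂ) + (1 / 2 : ℂ) *
        (((-(Real.sign b) * Real.arccos
            (Real.sqrt ((Real.cos (Real.pi / 2 + a) ^ 2 + Real.cosh b ^ 2 - 2) ^ 2
                + 4 * Real.cos (Real.pi / 2 + a) ^ 2 * Real.cosh b ^ 2)
              - (Real.cos (Real.pi / 2 + a) ^ 2 + Real.cosh b ^ 2 - 1)) : ℝ) : ℂ)
          + Complex.I *
            ((Real.sign a * arcosh
              (Real.sqrt ((Real.cos (Real.pi / 2 + a) ^ 2 + Real.cosh b ^ 2 - 2) ^ 2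
                  + 4 * Real.cos (Real.pi / 2 + a) ^ 2 * Real.cosh b ^ 2)
                + (Real.cos (Real.pi / 2 + a) ^ 2 + Real.cosh b ^ 2 - 1)) : ℝ) : ℂ)) := by
  have hIx : ‖Complex.I • x‖ = ‖x‖ := by rw [norm_smul, Complex.norm_I, one_mul]
  have harg : cprod (Complex.I • x) y / ((‖Complex.I • x‖ * ‖y‖ : ℝ) : ℂ)
      = Complex.I * (cprod x y / ((‖x‖ * ‖y‖ : ℝ) : ℂ)) := by
    rw [cprod_I_smul x y hx hy, hIx, mul_div_assoc]
  rw [cangle, harg]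
  rw [cangle] at hangle
  exact key _ a b (cprod_div_re_sq_le x y hx hy) hangle
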